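/- Let V be an n-dimensional real vector space (n ≥ 4) with a nondegenerate symmetric bilinear form g, and let R be an algebraic curvature tensor on V with Ricci tensor S, scalar curvature κ, Weyl tensor C = R − (1/(n−2)) g∧S + (κ/((n−2)(n−1))) G and conharmonic tensor conh(R) = R − (1/(n−2)) g∧S. Then the following four identities hold: (1) conh(R)·S = C·S − (κ/((n−2)(n−1))) Q(g,S); (2) R·conh(R) = R·C; (3) conh(R)·R = C·R − (κ/((n−2)(n−1))) Q(g,R); (4) conh(R)·conh(R) = C·C − (κ/((n−2)(n−1))) Q(g,C). -/
import Mathlib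


noncomputable section

open scoped BigOperators

variable {n : ℕ}

/-- Components of the inverse Gram matrix `g^{ij}`. -/
def ginvA (g : Fin n → Fin n → ℝ) (i j : Fin n) : ℝ := (Matrix.of g)⁻¹ i j

/-- The Ricci tensor `S(Y,Z) = g^{ij} R(eᵢ,Y,Z,eⱼ)` of an algebraic curvature tensor. -/
def ricciA (g : Fin n → Fin n → ℝ) (R : Fin n → Fin n → Fin n → Fin n → ℝ)
    (i j : Fin n) : ℝ :=
  ∑ r, ∑ s, ginvA g r s * R r i j s

/-- The scalar curvature `κ = g^{ij} S_{ij}`. -/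
def scalarA (g : Fin n → Fin n → ℝ) (R : Fin n → Fin n → Fin n → Fin n → ℝ) : ℝ :=
  ∑ i, ∑ j, ginvA g i j * ricciA g R i j

/-- The Kulkarni–Nomizu product of two symmetric (0,2)-tensors. -/
def knA (A B : Fin n → Fin n → ℝ) (X1 X2 X3 X4 : Fin n) : ℝ :=
  A X1 X4 * B X2 X3 + A X2 X3 * B X1 X4 - A X1 X3 * B X2 X4 - A X2 X4 * B X1 X3

/-- The Gaussian curvature tensor `G = (1/2) g ∧ g`. -/
def GA (g : Fin n → Fin n → ℝ) (i j k l : Fin n) : ℝ := (1/2) * knA g g i j k l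

/-- The Weyl tensor `C = R − (1/(n−2)) g∧S + (κ/((n−2)(n−1))) G`. -/
def weylA (g : Fin n → Fin n → ℝ) (R : Fin n → Fin n → Fin n → Fin n → ℝ)
    (h i j k : Fin n) : ℝ :=
  R h i j k - (1/((n:ℝ)-2)) * knA g (ricciA g R) h i j k
    + (scalarA g R / (((n:ℝ)-2)*((n:ℝ)-1))) * GA g h i j k

/-- The conharmonic tensor `conh(R) = R − (1/(n−2)) g∧S`. -/
def conhA (g : Fin n → Fin n → ℝ) (R : Fin n → Fin n → Fin n → Fin n → ℝ)
    (h i j k : Fin n) : ℝ :=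
  R h i j k - (1/((n:ℝ)-2)) * knA g (ricciA g R) h i j k

/-- The (0,6)-tensor `T·T'`: the curvature-type tensor `T` acts as a derivation,
through the endomorphisms `𝒯(X,Y)` with `g(𝒯(X,Y)Z,W) = T(X,Y,Z,W)`, on `T'`. -/
def dot44A (g : Fin n → Fin n → ℝ) (T T' : Fin n → Fin n → Fin n → Fin n → ℝ)
    (h i j k l m : Fin n) : ℝ :=
  -(∑ r, ∑ s, ginvA g r s *
    (T l m h s * T' r i j k + T l m i s * T' h r j k
      + T l m j s * T' h i r k + T l m k s * T' h i j r))

/-- The (0,4)-tensor `T·A` for a curvature-type tensor `T` acting on a (0,2)-tensor `A`. -/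
def dot42A (g : Fin n → Fin n → ℝ) (T : Fin n → Fin n → Fin n → Fin n → ℝ)
    (A : Fin n → Fin n → ℝ) (i j l m : Fin n) : ℝ :=
  -(∑ r, ∑ s, ginvA g r s * (T l m i s * A r j + T l m j s * A i r))

/-- The Tachibana tensor `Q(A,T')` of a symmetric (0,2)-tensor and a (0,4)-tensor. -/
def tach4A (A : Fin n → Fin n → ℝ) (T' : Fin n → Fin n → Fin n → Fin n → ℝ)
    (h i j k l m : Fin n) : ℝ :=
  -((A m h * T' l i j k - A l h * T' m i j k)
    + (A m i * T' h l j k - A l i * T' h m j k)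
    + (A m j * T' h i l k - A l j * T' h i m k)
    + (A m k * T' h i j l - A l k * T' h i j m))

/-- The Tachibana tensor `Q(A,B)` of two (0,2)-tensors. -/
def tach2A (A B : Fin n → Fin n → ℝ) (i j l m : Fin n) : ℝ :=
  -((A m i * B l j - A l i * B m j) + (A m j * B i l - A l j * B i m))


section Aux

lemma contr1 {n : ℕ} (g : Fin n → Fin n → ℝ) (hgsym : ∀ i j, g i j = g j i)
    (hgdet : (Matrix.of g).det ≠ 0) (x : Fin n) (F : Fin n → ℝ) :
    ∑ r, ∑ s, ginvA g r s * g x s * F r = F x := by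
  have h1 : (Matrix.of g)⁻¹ * Matrix.of g = 1 :=
    Matrix.nonsing_inv_mul _ (isUnit_iff_ne_zero.mpr hgdet)
  have h2 : ∀ r : Fin n, (∑ s, ginvA g r s * g x s) = if r = x then 1 else 0 := by
    intro r
    have h3 : ((Matrix.of g)⁻¹ * Matrix.of g) r x = (1 : Matrix (Fin n) (Fin n) ℝ) r x := by
      rw [h1]
    rw [Matrix.mul_apply, Matrix.one_apply] at h3
    calc ∑ s, ginvA g r s * g x s = ∑ s, (Matrix.of g)⁻¹ r s * Matrix.of g s x := by
          apply Finset.sum_congr rfl; intro s _; rw [ginvA, hgsym x s]; rfl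
      _ = _ := h3
  calc ∑ r, ∑ s, ginvA g r s * g x s * F r
      = ∑ r, (∑ s, ginvA g r s * g x s) * F r := by
        apply Finset.sum_congr rfl; intro r _; rw [Finset.sum_mul]
    _ = ∑ r, (if r = x then 1 else 0) * F r := by
        apply Finset.sum_congr rfl; intro r _; rw [h2]
    _ = F x := by simp

lemma contr2a {n : ℕ} (g : Fin n → Fin n → ℝ) (hgsym : ∀ i j, g i j = g j i)
    (hgdet : (Matrix.of g).det ≠ 0) (x : Fin n) (F : Fin n → ℝ) :
    ∑ r, ∑ s, ginvA g r s * g r x * F s = F x := by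
  have h1 : Matrix.of g * (Matrix.of g)⁻¹ = 1 :=
    Matrix.mul_nonsing_inv _ (isUnit_iff_ne_zero.mpr hgdet)
  have h2 : ∀ s : Fin n, (∑ r, ginvA g r s * g r x) = if x = s then 1 else 0 := by
    intro s
    have h3 : (Matrix.of g * (Matrix.of g)⁻¹) x s = (1 : Matrix (Fin n) (Fin n) ℝ) x s := by
      rw [h1]
    rw [Matrix.mul_apply, Matrix.one_apply] at h3
    calc ∑ r, ginvA g r s * g r x = ∑ r, Matrix.of g x r * (Matrix.of g)⁻¹ r s := by
          apply Finset.sum_congr rfl; intro r _; rw [ginvA, hgsym r x, mul_comm]; rfl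
      _ = _ := h3
  rw [Finset.sum_comm]
  calc ∑ s, ∑ r, ginvA g r s * g r x * F s
      = ∑ s, (∑ r, ginvA g r s * g r x) * F s := by
        apply Finset.sum_congr rfl; intro s _; rw [Finset.sum_mul]
    _ = ∑ s, (if x = s then 1 else 0) * F s := by
        apply Finset.sum_congr rfl; intro s _; rw [h2]
    _ = F x := by simp

lemma contr2b {n : ℕ} (g : Fin n → Fin n → ℝ) (hgsym : ∀ i j, g i j = g j i)
    (hgdet : (Matrix.of g).det ≠ 0) (x : Fin n) (F : Fin n → ℝ) :
    ∑ r, ∑ s, ginvA g r s * g x r * F s = F x := by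
  have hmain := contr2a g hgsym hgdet x F
  calc ∑ r, ∑ s, ginvA g r s * g x r * F s
      = ∑ r, ∑ s, ginvA g r s * g r x * F s := by
        apply Finset.sum_congr rfl; intro r _
        apply Finset.sum_congr rfl; intro s _
        rw [hgsym x r]
    _ = F x := hmain

lemma sum2_congr {n : ℕ} {f f' : Fin n → Fin n → ℝ} (h : ∀ r s, f r s = f' r s) :
    ∑ r, ∑ s, f r s = ∑ r, ∑ s, f' r s :=
  Finset.sum_congr rfl fun r _ => Finset.sum_congr rfl fun s _ => h r s

/-- `G` acts from the left in `dot44A` as the Tachibana operator. -/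
lemma dot44A_GA_left {n : ℕ} (g : Fin n → Fin n → ℝ) (hgsym : ∀ i j, g i j = g j i)
    (hgdet : (Matrix.of g).det ≠ 0) (T' : Fin n → Fin n → Fin n → Fin n → ℝ)
    (h i j k l m : Fin n) :
    dot44A g (GA g) T' h i j k l m = tach4A g T' h i j k l m := by
  unfold dot44A
  rw [sum2_congr (f' := fun r s =>
      (ginvA g r s * g l s * (g m h * T' r i j k)
        - ginvA g r s * g m s * (g l h * T' r i j k))
      + ((ginvA g r s * g l s * (g m i * T' h r j k)
        - ginvA g r s * g m s * (g l i * T' h r j k))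
      + ((ginvA g r s * g l s * (g m j * T' h i r k)
        - ginvA g r s * g m s * (g l j * T' h i r k))
      + (ginvA g r s * g l s * (g m k * T' h i j r)
        - ginvA g r s * g m s * (g l k * T' h i j r)))))
      (fun r s => by simp only [GA, knA]; ring)]
  simp only [Finset.sum_add_distrib, Finset.sum_sub_distrib]
  simp only [contr1 g hgsym hgdet]
  unfold tach4A; ring

/-- `G` acts from the left in `dot42A` as the Tachibana operator. -/
lemma dot42A_GA_left {n : ℕ} (g : Fin n → Fin n → ℝ) (hgsym : ∀ i j, g i j = g j i)
    (hgdet : (Matrix.of g).det ≠ 0) (A : Fin n → Fin n → ℝ) (i j l m : Fin n) :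
    dot42A g (GA g) A i j l m = tach2A g A i j l m := by
  unfold dot42A
  rw [sum2_congr (f' := fun r s =>
      (ginvA g r s * g l s * (g m i * A r j)
        - ginvA g r s * g m s * (g l i * A r j))
      + (ginvA g r s * g l s * (g m j * A i r)
        - ginvA g r s * g m s * (g l j * A i r)))
      (fun r s => by simp only [GA, knA]; ring)]
  simp only [Finset.sum_add_distrib, Finset.sum_sub_distrib]
  simp only [contr1 g hgsym hgdet]
  unfold tach2A; ring

/-- A curvature-type tensor antisymmetric in its last two slots kills `G`. -/
lemma dot44A_GA_right {n : ℕ} (g : Fin n → Fin n → ℝ) (hgsym : ∀ i j, g i j = g j i)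
    (hgdet : (Matrix.of g).det ≠ 0) (T : Fin n → Fin n → Fin n → Fin n → ℝ)
    (hT : ∀ a b c d, T a b c d = - T a b d c) (h i j k l m : Fin n) :
    dot44A g T (GA g) h i j k l m = 0 := by
  unfold dot44A
  rw [sum2_congr (f' := fun r s =>
      (ginvA g r s * g r k * (g i j * T l m h s)
        - ginvA g r s * g r j * (g i k * T l m h s))
      + ((ginvA g r s * g r j * (g h k * T l m i s)
        - ginvA g r s * g r k * (g h j * T l m i s))
      + ((ginvA g r s * g i r * (g h k * T l m j s)
        - ginvA g r s * g h r * (g i k * T l m j s))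
      + (ginvA g r s * g h r * (g i j * T l m k s)
        - ginvA g r s * g i r * (g h j * T l m k s)))))
      (fun r s => by simp only [GA, knA]; ring)]
  simp only [Finset.sum_add_distrib, Finset.sum_sub_distrib]
  simp only [contr2a g hgsym hgdet, contr2b g hgsym hgdet]
  linear_combination (-(g i j)) * hT l m h k + g i k * hT l m h j
    + (-(g h k)) * hT l m i j + g h j * hT l m i k

/-- The Tachibana operator `Q(g, ·)` kills `G`. -/
lemma tach4A_GA {n : ℕ} (g : Fin n → Fin n → ℝ) (hgsym : ∀ i j, g i j = g j i)
    (h i j k l m : Fin n) : tach4A g (GA g) h i j k l m = 0 := by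
  simp only [tach4A, GA, knA]
  simp only [hgsym i h, hgsym j h, hgsym k h, hgsym l h, hgsym m h, hgsym j i, hgsym k i,
    hgsym l i, hgsym m i, hgsym k j, hgsym l j, hgsym m j, hgsym l k, hgsym m k, hgsym m l]
  ring

/-- Linearity of `dot44A` in its first tensor slot. -/
lemma dot44A_left_split {n : ℕ} (g : Fin n → Fin n → ℝ) (c : ℝ)
    (T1 T2 T3 T' : Fin n → Fin n → Fin n → Fin n → ℝ)
    (hT : ∀ a b c' d, T1 a b c' d = T2 a b c' d - c * T3 a b c' d)
    (h i j k l m : Fin n) :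
    dot44A g T1 T' h i j k l m
      = dot44A g T2 T' h i j k l m - c * dot44A g T3 T' h i j k l m := by
  unfold dot44A
  rw [sum2_congr (f' := fun r s =>
      (ginvA g r s * (T2 l m h s * T' r i j k + T2 l m i s * T' h r j k
        + T2 l m j s * T' h i r k + T2 l m k s * T' h i j r))
      - c * (ginvA g r s * (T3 l m h s * T' r i j k + T3 l m i s * T' h r j k
        + T3 l m j s * T' h i r k + T3 l m k s * T' h i j r)))
      (fun r s => by rw [hT l m h s, hT l m i s, hT l m j s, hT l m k s]; ring)]
  simp only [Finset.sum_sub_distrib, ← Finset.mul_sum]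
  ring

/-- Linearity of `dot44A` in its second tensor slot. -/
lemma dot44A_right_split {n : ℕ} (g : Fin n → Fin n → ℝ) (c : ℝ)
    (T T1 T2 T3 : Fin n → Fin n → Fin n → Fin n → ℝ)
    (hT : ∀ a b c' d, T1 a b c' d = T2 a b c' d - c * T3 a b c' d)
    (h i j k l m : Fin n) :
    dot44A g T T1 h i j k l m
      = dot44A g T T2 h i j k l m - c * dot44A g T T3 h i j k l m := by
  unfold dot44A
  rw [sum2_congr (f' := fun r s =>
      (ginvA g r s * (T l m h s * T2 r i j k + T l m i s * T2 h r j k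
        + T l m j s * T2 h i r k + T l m k s * T2 h i j r))
      - c * (ginvA g r s * (T l m h s * T3 r i j k + T l m i s * T3 h r j k
        + T l m j s * T3 h i r k + T l m k s * T3 h i j r)))
      (fun r s => by rw [hT r i j k, hT h r j k, hT h i r k, hT h i j r]; ring)]
  simp only [Finset.sum_sub_distrib, ← Finset.mul_sum]
  ring

/-- Linearity of `dot42A` in its tensor slot. -/
lemma dot42A_left_split {n : ℕ} (g : Fin n → Fin n → ℝ) (c : ℝ)
    (T1 T2 T3 : Fin n → Fin n → Fin n → Fin n → ℝ) (A : Fin n → Fin n → ℝ)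
    (hT : ∀ a b c' d, T1 a b c' d = T2 a b c' d - c * T3 a b c' d)
    (i j l m : Fin n) :
    dot42A g T1 A i j l m = dot42A g T2 A i j l m - c * dot42A g T3 A i j l m := by
  unfold dot42A
  rw [sum2_congr (f' := fun r s =>
      (ginvA g r s * (T2 l m i s * A r j + T2 l m j s * A i r))
      - c * (ginvA g r s * (T3 l m i s * A r j + T3 l m j s * A i r)))
      (fun r s => by rw [hT l m i s, hT l m j s]; ring)]
  simp only [Finset.sum_sub_distrib, ← Finset.mul_sum]
  ring

end Aux

/-- For an algebraic curvature tensor `R` on an `n`-dimensional real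
vector space (`n ≥ 4`) with nondegenerate symmetric bilinear form `g`:
(1) `conh(R)·S = C·S − (κ/((n−2)(n−1))) Q(g,S)`;
(2) `R·conh(R) = R·C`;
(3) `conh(R)·R = C·R − (κ/((n−2)(n−1))) Q(g,R)`;
(4) `conh(R)·conh(R) = C·C − (κ/((n−2)(n−1))) Q(g,C)`. -/
theorem conharmonic_identities {n : ℕ} (hn : 4 ≤ n)
    (g : Fin n → Fin n → ℝ) (hgsym : ∀ i j, g i j = g j i)
    (hgdet : (Matrix.of g).det ≠ 0)
    (R : Fin n → Fin n → Fin n → Fin n → ℝ)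
    (hanti : ∀ X Y Z W, R X Y Z W = - R Y X Z W)
    (hpair : ∀ X Y Z W, R X Y Z W = R Z W X Y)
    (hbianchi : ∀ X Y Z W, R X Y Z W + R Y Z X W + R Z X Y W = 0) :
    (∀ i j l m : Fin n,
      dot42A g (conhA g R) (ricciA g R) i j l m
        = dot42A g (weylA g R) (ricciA g R) i j l m
          - (scalarA g R / (((n:ℝ)-2)*((n:ℝ)-1))) * tach2A g (ricciA g R) i j l m) ∧
    (∀ h i j k l m : Fin n,
      dot44A g R (conhA g R) h i j k l m = dot44A g R (weylA g R) h i j k l m) ∧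
    (∀ h i j k l m : Fin n,
      dot44A g (conhA g R) R h i j k l m
        = dot44A g (weylA g R) R h i j k l m
          - (scalarA g R / (((n:ℝ)-2)*((n:ℝ)-1))) * tach4A g R h i j k l m) ∧
    (∀ h i j k l m : Fin n,
      dot44A g (conhA g R) (conhA g R) h i j k l m
        = dot44A g (weylA g R) (weylA g R) h i j k l m
          - (scalarA g R / (((n:ℝ)-2)*((n:ℝ)-1))) * tach4A g (weylA g R) h i j k l m) := by

  set cc : ℝ := scalarA g R / (((n:ℝ)-2)*((n:ℝ)-1)) with hcc
  have hconh : ∀ a b c d : Fin n,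
      conhA g R a b c d = weylA g R a b c d - cc * GA g a b c d := by
    intro a b c d; rw [hcc]; unfold conhA weylA; ring
  have hR4 : ∀ a b c d : Fin n, R a b c d = - R a b d c := by
    intro a b c d
    rw [hpair a b c d, hanti c d a b, hpair d c a b]
  have hW4 : ∀ a b c d : Fin n, weylA g R a b c d = - weylA g R a b d c := by
    intro a b c d
    unfold weylA GA knA
    rw [hR4 a b c d]; ring
  refine ⟨?_, ?_, ?_, ?_⟩
  · intro i j l m
    rw [dot42A_left_split g cc (conhA g R) (weylA g R) (GA g) (ricciA g R) hconh,
      dot42A_GA_left g hgsym hgdet]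
  · intro h i j k l m
    rw [dot44A_right_split g cc R (conhA g R) (weylA g R) (GA g) hconh,
      dot44A_GA_right g hgsym hgdet R hR4]
    ring
  · intro h i j k l m
    rw [dot44A_left_split g cc (conhA g R) (weylA g R) (GA g) R hconh,
      dot44A_GA_left g hgsym hgdet]
  · intro h i j k l m
    have htach : tach4A g (conhA g R) h i j k l m
        = tach4A g (weylA g R) h i j k l m - cc * tach4A g (GA g) h i j k l m := by
      unfold tach4A
      rw [hconh l i j k, hconh m i j k, hconh h l j k, hconh h m j k, hconh h i l k,
        hconh h i m k, hconh h i j l, hconh h i j m]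
      ring
    rw [dot44A_left_split g cc (conhA g R) (weylA g R) (GA g) (conhA g R) hconh,
      dot44A_GA_left g hgsym hgdet,
      dot44A_right_split g cc (weylA g R) (conhA g R) (weylA g R) (GA g) hconh,
      dot44A_GA_right g hgsym hgdet (weylA g R) hW4,
      htach, tach4A_GA g hgsym]
    ring
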